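/- Let E be a barrelled locally convex Hausdorff topological vector space over ℂ in which every bounded subset is relatively compact (i.e. E is a Montel space), let T : E → E be a continuous linear operator, let E′_β denote the topological dual of E equipped with the strong topology β(E′,E) of uniform convergence on bounded subsets of E, and let Tᵗ : E′_β → E′_β, Tᵗu = u ∘ T, be the transpose of T. Then T is mean ergodic on E if and only if Tᵗ is mean ergodic on E′_β. -/

import Mathlib

open Filter Topology

/-- The `n`-th Cesàro mean of `T` applied to `x`: `(1/n) ∑_{m=1}^{n} Tᵐ x`. -/
noncomputable def cesaroMean {E : Type*} [AddCommGroup E] [Module ℂ E] [TopologicalSpace E]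
    (T : E →L[ℂ] E) (n : ℕ) (x : E) : E :=
  (n : ℂ)⁻¹ • ∑ m ∈ Finset.Icc 1 n, (T ^ m) x

/-- The `n`-th Cesàro mean of the transpose `Tᵗ`, `Tᵗ u = u ∘ T`, applied to a continuous
linear functional `u`:  `(1/n) ∑_{m=1}^{n} (Tᵗ)ᵐ u = (1/n) ∑_{m=1}^{n} u ∘ Tᵐ`.  Here the
dual `E →L[ℂ] ℂ` carries its canonical strong topology `β(E′,E)` of uniform convergence on
bounded subsets of `E`. -/
noncomputable def cesaroMeanTranspose {E : Type*} [AddCommGroup E] [Module ℂ E]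
    [TopologicalSpace E] [IsTopologicalAddGroup E] [ContinuousSMul ℂ E]
    (T : E →L[ℂ] E) (n : ℕ) (u : E →L[ℂ] ℂ) : E →L[ℂ] ℂ :=
  (n : ℂ)⁻¹ • ∑ m ∈ Finset.Icc 1 n, u.comp (T ^ m)

/-! The Cesàro means `Sₙ` of `T` are continuous operators, and those of `Tᵗ` are the maps
`u ↦ u ∘ Sₙ`. If `Sₙ → P` pointwise, the orbits `(Sₙ x)` are bounded, so barrelledness makes
`(Sₙ)` equicontinuous; equicontinuity upgrades pointwise convergence to uniform convergence on
compact sets, which by the Montel property cover every bounded set, hence `u ∘ Sₙ → u ∘ P`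
in `E′_β`. Conversely, if `Tᵗ` is mean ergodic, every orbit `(Sₙ x)` converges weakly, so it is
weakly bounded and therefore bounded (Mackey). It is then relatively compact, and all its cluster
points coincide because continuous functionals separate points, so it converges; equicontinuity
makes the limit operator continuous. -/

open scoped ComplexOrder

section CesaroOperator

variable {E : Type*} [AddCommGroup E] [Module ℂ E] [TopologicalSpace E]
  [IsTopologicalAddGroup E] [ContinuousSMul ℂ E]

noncomputable def cesaroCLM (T : E →L[ℂ] E) (n : ℕ) : E →L[ℂ] E :=
  (n : ℂ)⁻¹ • ∑ m ∈ Finset.Icc 1 n, T ^ m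

theorem cesaroCLM_apply (T : E →L[ℂ] E) (n : ℕ) (x : E) :
    cesaroCLM T n x = cesaroMean T n x := by
  simp [cesaroCLM, cesaroMean]

theorem cesaroMeanTranspose_eq_comp (T : E →L[ℂ] E) (n : ℕ) (u : E →L[ℂ] ℂ) :
    cesaroMeanTranspose T n u = u.comp (cesaroCLM T n) := by
  ext x
  simp [cesaroMeanTranspose, cesaroCLM_apply, cesaroMean, map_sum]

end CesaroOperator

section LocallyConvex

variable {𝕜 E : Type*} [RCLike 𝕜] [AddCommGroup E] [Module 𝕜 E] [Module ℝ E]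
  [IsScalarTower ℝ 𝕜 E] [TopologicalSpace E]

theorem LocallyConvexSpace.of_real [LocallyConvexSpace ℝ E] : LocallyConvexSpace 𝕜 E := by
  simp_rw [locallyConvexSpace_iff, convex_RCLike_iff_convex_real]
  exact LocallyConvexSpace.convex_basis

theorem SeparatingDual.of_locallyConvexSpace_real [IsTopologicalAddGroup E] [ContinuousSMul 𝕜 E]
    [LocallyConvexSpace ℝ E] [T1Space E] : SeparatingDual 𝕜 E := by
  refine ⟨fun x hx => ?_⟩
  obtain ⟨f, hf⟩ := RCLike.geometric_hahn_banach_point_point (𝕜 := 𝕜) hx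
  exact ⟨f, fun hfx => by simp [hfx] at hf⟩

end LocallyConvex

section Mackey

open Bornology

variable {𝕜 : Type*} [RCLike 𝕜]

theorem NormedSpace.isBounded_of_forall_dual_isBounded {X : Type*} [SeminormedAddCommGroup X]
    [NormedSpace 𝕜 X] {t : Set X} (h : ∀ f : StrongDual 𝕜 X, IsBounded (f '' t)) :
    IsBounded t := by
  obtain ⟨C, hC⟩ := banach_steinhaus (g := fun x : t => inclusionInDoubleDual 𝕜 X x) fun f => by
    obtain ⟨C, hC⟩ := isBounded_iff_forall_norm_le.mp (h f)
    exact ⟨C, fun x => hC _ (Set.mem_image_of_mem f x.2)⟩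
  refine isBounded_iff_forall_norm_le.mpr ⟨C, fun x hx => ?_⟩
  rw [← (inclusionInDoubleDualLi 𝕜).norm_map x]
  exact hC ⟨x, hx⟩

variable {E : Type*} [AddCommGroup E] [Module 𝕜 E]

def Seminorm.Space (_p : Seminorm 𝕜 E) : Type _ := E

namespace Seminorm.Space

variable (p : Seminorm 𝕜 E)

instance : AddCommGroup p.Space := inferInstanceAs (AddCommGroup E)

instance : Module 𝕜 p.Space := inferInstanceAs (Module 𝕜 E)

noncomputable instance : SeminormedAddCommGroup p.Space :=
  AddGroupSeminorm.toSeminormedAddCommGroup (p.toAddGroupSeminorm : AddGroupSeminorm E)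

noncomputable instance : NormedSpace 𝕜 p.Space where
  norm_smul_le c x := (map_smul_eq_mul p c (x : E)).le

def of : E →ₗ[𝕜] p.Space := LinearMap.id

theorem norm_of (x : E) : ‖of p x‖ = p x := rfl

end Seminorm.Space

variable [TopologicalSpace E] [PolynormableSpace 𝕜 E]

theorem Seminorm.bddAbove_image_of_forall_dual_isBounded {p : Seminorm 𝕜 E} (hp : Continuous p)
    {s : Set E} (h : ∀ f : StrongDual 𝕜 E, Bornology.IsBounded (f '' s)) : BddAbove (p '' s) := by
  have hbdd : Bornology.IsBounded (Seminorm.Space.of p '' s) := by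
    refine NormedSpace.isBounded_of_forall_dual_isBounded (𝕜 := 𝕜) fun φ => ?_
    -- `φ` is dominated by `‖φ‖ • p`, hence continuous on `E`
    let f : StrongDual 𝕜 E := ⟨φ.toLinearMap ∘ₗ Seminorm.Space.of p,
      (PolynormableSpace.withSeminorms 𝕜 E).continuous_normedSpace_rng 𝕜 _
        ⟨{⟨p, hp⟩}, ‖φ‖₊, fun x => (φ.le_opNorm (Seminorm.Space.of p x)).trans_eq
          (by simp [Seminorm.Space.norm_of, NNReal.smul_def])⟩⟩
    rw [Set.image_image]
    exact h f
  obtain ⟨C, hC⟩ := isBounded_iff_forall_norm_le.mp hbdd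
  exact ⟨C, Set.forall_mem_image.mpr fun x hx => hC _ (Set.mem_image_of_mem _ hx)⟩

theorem isVonNBounded_of_forall_dual_isBounded {s : Set E}
    (h : ∀ f : StrongDual 𝕜 E, IsBounded (f '' s)) : IsVonNBounded 𝕜 s :=
  (PolynormableSpace.withSeminorms 𝕜 E).isVonNBounded_iff_seminorm_bddAbove.mpr fun p =>
    Seminorm.bddAbove_image_of_forall_dual_isBounded p.2 h

end Mackey

theorem Equicontinuous.tendstoUniformlyOn_of_tendsto {ι X α : Type*} [TopologicalSpace X]
    [UniformSpace α] {F : ι → X → α} (hF : Equicontinuous F) {l : Filter ι} {f : X → α}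
    (hf : ∀ x, Tendsto (F · x) l (𝓝 (f x))) {K : Set X} (hK : IsCompact K) :
    TendstoUniformlyOn F f l K := by
  have hconv := (EquicontinuousOn.tendsto_uniformOnFun_iff_pi' (𝔖 := {K})
    (by simpa using hK) (by simpa using hF.equicontinuousOn K) l f).mpr
    (tendsto_pi_nhds.mpr fun x => hf x)
  exact UniformOnFun.tendsto_iff_tendstoUniformlyOn.mp hconv K rfl

theorem ContinuousLinearMap.tendsto_of_equicontinuous_of_isCompact_closure {𝕜 E F ι : Type*}
    [NontriviallyNormedField 𝕜] [AddCommGroup E] [Module 𝕜 E] [TopologicalSpace E]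
    [AddCommGroup F] [Module 𝕜 F] [UniformSpace F] [IsUniformAddGroup F]
    (hmontel : ∀ s : Set E, Bornology.IsVonNBounded 𝕜 s → IsCompact (closure s))
    {S : ι → E →L[𝕜] F} (hS : Equicontinuous fun i => ⇑(S i)) {l : Filter ι} {P : E →L[𝕜] F}
    (hP : ∀ x, Tendsto (S · x) l (𝓝 (P x))) : Tendsto S l (𝓝 P) := by
  rw [ContinuousLinearMap.isUniformEmbedding_toUniformOnFun.isInducing.tendsto_nhds_iff,
    UniformOnFun.tendsto_iff_tendstoUniformlyOn]
  exact fun s hs => (hS.tendstoUniformlyOn_of_tendsto hP (hmontel s hs)).mono subset_closure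

theorem MapClusterPt.eq_of_tendsto {ι X : Type*} [TopologicalSpace X] [T2Space X] {l : Filter ι}
    {x : ι → X} {y c : X} (hy : MapClusterPt y l x) (hc : Tendsto x l (𝓝 c)) : y = c :=
  eq_of_nhds_neBot (hy.neBot.mono (inf_le_inf_left _ hc))

theorem exists_tendsto_of_isCompact_closure_of_forall_dual_tendsto {𝕜 E ι : Type*}
    [NontriviallyNormedField 𝕜] [AddCommGroup E] [Module 𝕜 E] [TopologicalSpace E]
    [SeparatingDual 𝕜 E] {l : Filter ι} [l.NeBot] {x : ι → E}
    (hx : IsCompact (closure (Set.range x)))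
    (hweak : ∀ f : StrongDual 𝕜 E, ∃ c, Tendsto (fun i => f (x i)) l (𝓝 c)) :
    ∃ y, Tendsto x l (𝓝 y) := by
  have hmem : ∀ᶠ i in l, x i ∈ closure (Set.range x) :=
    Eventually.of_forall fun i => subset_closure (Set.mem_range_self i)
  obtain ⟨y, -, hy⟩ := hx.exists_clusterPt (tendsto_principal.mpr hmem)
  have hvalue : ∀ z, MapClusterPt z l x → ∀ f : StrongDual 𝕜 E, MapClusterPt (f z) l (f ∘ x) :=
    fun z hz f => hz.continuousAt_comp f.continuous.continuousAt
  refine ⟨y, hx.tendsto_nhds_of_unique_mapClusterPt hmem fun z _ hz => ?_⟩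
  refine (SeparatingDual.eq_iff_forall_dual_eq (R := 𝕜)).mpr fun f => ?_
  obtain ⟨c, hc⟩ := hweak f
  exact ((hvalue z hz f).eq_of_tendsto hc).trans ((hvalue y hy f).eq_of_tendsto hc).symm

theorem ContinuousLinearMap.exists_tendsto_of_equicontinuous {𝕜 E F ι : Type*}
    [NontriviallyNormedField 𝕜] [AddCommGroup E] [Module 𝕜 E] [TopologicalSpace E]
    [AddCommGroup F] [Module 𝕜 F] [UniformSpace F] [IsUniformAddGroup F] [ContinuousConstSMul 𝕜 F]
    [T2Space F] {l : Filter ι} [l.NeBot] {S : ι → E →L[𝕜] F}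
    (hS : Equicontinuous fun i => ⇑(S i)) (hlim : ∀ x, ∃ y, Tendsto (S · x) l (𝓝 y)) :
    ∃ P : E →L[𝕜] F, ∀ x, Tendsto (S · x) l (𝓝 (P x)) := by
  choose f hf using hlim
  have htendsto : Tendsto (fun i => ⇑(S i)) l (𝓝 f) := tendsto_pi_nhds.mpr hf
  exact ⟨⟨linearMapOfTendsto f (fun i => (S i : E →ₗ[𝕜] F)) htendsto,
    htendsto.continuous_of_equicontinuous hS⟩, hf⟩

/-- On a Montel space `E`, an operator `T` is mean ergodic on `E` if and only if its
transpose `Tᵗ` is mean ergodic on the strong dual `E′_β`. -/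
theorem stmt6 {E : Type*} [AddCommGroup E] [Module ℂ E] [Module ℝ E] [IsScalarTower ℝ ℂ E]
    [UniformSpace E] [IsUniformAddGroup E] [ContinuousSMul ℂ E]
    [LocallyConvexSpace ℝ E] [T2Space E]
    -- `E` is barrelled: every pointwise bounded family of continuous linear operators on `E`
    -- is equicontinuous (Banach–Steinhaus property)
    (hbarrelled : ∀ (ι : Type) (f : ι → E →L[ℂ] E),
      (∀ x : E, Bornology.IsVonNBounded ℂ (Set.range fun i => f i x)) →
        Equicontinuous fun i => ⇑(f i))
    -- every bounded subset of `E` is relatively compact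
    (hmontel : ∀ s : Set E, Bornology.IsVonNBounded ℂ s → IsCompact (closure s))
    (T : E →L[ℂ] E) :
    -- `T` is mean ergodic on `E` ...
    (∃ P : E →L[ℂ] E, ∀ x : E,
        Tendsto (fun n : ℕ => cesaroMean T (n + 1) x) atTop (𝓝 (P x))) ↔
      -- ... if and only if `Tᵗ` is mean ergodic on the strong dual `E′_β`
      (∃ Q : (E →L[ℂ] ℂ) →L[ℂ] (E →L[ℂ] ℂ), ∀ u : E →L[ℂ] ℂ,
        Tendsto (fun n : ℕ => cesaroMeanTranspose T (n + 1) u) atTop (𝓝 (Q u))) := by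
  have : ContinuousSMul ℝ E := IsScalarTower.continuousSMul ℂ
  have : LocallyConvexSpace ℂ E := .of_real
  have : SeparatingDual ℂ E := .of_locallyConvexSpace_real
  simp_rw [← cesaroCLM_apply, cesaroMeanTranspose_eq_comp]
  constructor
  · rintro ⟨P, hP⟩
    have hS := hbarrelled ℕ _ fun x => (hP x).isVonNBounded_range ℂ
    refine ⟨ContinuousLinearMap.precomp ℂ P, fun u => ?_⟩
    exact ((ContinuousLinearMap.postcomp E u).continuous.tendsto P).comp
      (ContinuousLinearMap.tendsto_of_equicontinuous_of_isCompact_closure hmontel hS hP)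
  · rintro ⟨Q, hQ⟩
    have hweak : ∀ x (u : StrongDual ℂ E),
        Tendsto (fun n => u (cesaroCLM T (n + 1) x)) atTop (𝓝 (Q u x)) :=
      fun x u => ((continuous_eval_const x).tendsto _).comp (hQ u)
    have hbdd : ∀ x, Bornology.IsVonNBounded ℂ (Set.range fun n => cesaroCLM T (n + 1) x) :=
      fun x => isVonNBounded_of_forall_dual_isBounded fun u => by
        rw [← Set.range_comp]
        exact Metric.isBounded_range_of_tendsto _ (hweak x u)
    exact ContinuousLinearMap.exists_tendsto_of_equicontinuous (hbarrelled ℕ _ hbdd) fun x =>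
      exists_tendsto_of_isCompact_closure_of_forall_dual_tendsto (hmontel _ (hbdd x))
        fun u => ⟨_, hweak x u⟩
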